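/- arXiv:2109.04271 — 3 statements merged into one kernel-verified Lean document; each statement's English description precedes it below -/
import Mathlib

section
/- Let m > d − 1 ≥ 1 and τ₁ > 0, R > 0. Then for all sufficiently small ε > 0, the remainder integral ∫_{ε^{1/(12m)} < |x'| < R} ε / (τ₁|x'|^m (ε + τ₁|x'|^m)) dx' over the (d−1)-dimensional annulus is bounded by C ε^{(10m + d − 1)/(12m)} for some constant C independent of ε, provided m > (d−1)/2. -/
/-!
With `u = τ₁ ‖x‖ ^ m`, the integrand `ε / (u (ε + u))` is at most
`ε / u ^ 2 = (ε / τ₁²) ‖x‖ ^ (-2m)`. In polar coordinates on `ℝⁿ`, `n = d - 1`, the integral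
of `‖x‖ ^ (-2m)` over `a < ‖x‖ < R` is at most a constant times
`∫_a^∞ r ^ (n - 1 - 2m) dr = a ^ (n - 2m) / (2m - n)`, which is finite because `2m > n`.
For `a = ε ^ (1 / (12m))` this gives `ε · a ^ (n - 2m) = ε ^ ((10m + n) / (12m))`,
for every `ε > 0`.
-/

open MeasureTheory Set Real Metric Module

theorem setIntegral_Ioo_rpow_le {a q : ℝ} (R : ℝ) (ha : 0 < a) (hq : q < -1) :
    ∫ y in Ioo a R, y ^ q ≤ a ^ (q + 1) / (-(q + 1)) :=
  calc ∫ y in Ioo a R, y ^ q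
      ≤ ∫ y in Ioi a, y ^ q :=
        setIntegral_mono_set (integrableOn_Ioi_rpow_of_lt hq ha)
          ((ae_restrict_mem measurableSet_Ioi).mono fun y hy ↦ (rpow_pos_of_pos (ha.trans hy) q).le)
          Ioo_subset_Ioi_self.eventuallyLE
    _ = a ^ (q + 1) / (-(q + 1)) := by rw [integral_Ioi_rpow_of_lt hq ha, neg_div, div_neg]

theorem div_mul_add_le_div_sq {ε u : ℝ} (hε : 0 ≤ ε) (hu : 0 < u) :
    ε / (u * (ε + u)) ≤ ε / u ^ 2 :=
  div_le_div_of_nonneg_left hε (by positivity) (by nlinarith)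

theorem setIntegral_Ioo_pow_smul_le {k : ℕ} {m τ ε a : ℝ} (R : ℝ) (hk : (k : ℝ) + 1 < 2 * m)
    (hτ : 0 < τ) (hε : 0 ≤ ε) (ha : 0 < a) :
    ∫ y in Ioo a R, y ^ k • (ε / (τ * y ^ m * (ε + τ * y ^ m))) ≤
      ε / τ ^ 2 * (a ^ ((k : ℝ) + 1 - 2 * m) / (2 * m - (k + 1))) := by
  have hq : (k : ℝ) - 2 * m < -1 := by linarith
  calc ∫ y in Ioo a R, y ^ k • (ε / (τ * y ^ m * (ε + τ * y ^ m)))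
      ≤ ∫ y in Ioo a R, ε / τ ^ 2 * y ^ ((k : ℝ) - 2 * m) := by
        refine integral_mono_of_nonneg ?_
          (((integrableOn_Ioi_rpow_of_lt hq ha).mono_set Ioo_subset_Ioi_self).const_mul _) ?_
        all_goals
          filter_upwards [ae_restrict_mem measurableSet_Ioo] with y hy
          have hy₀ : 0 < y := ha.trans hy.1
          have hym : 0 < τ * y ^ m := by positivity
        · positivity
        · calc y ^ k • (ε / (τ * y ^ m * (ε + τ * y ^ m)))
              ≤ y ^ k * (ε / (τ * y ^ m) ^ 2) := by
                rw [smul_eq_mul]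
                exact mul_le_mul_of_nonneg_left (div_mul_add_le_div_sq hε hym) (by positivity)
            _ = ε / τ ^ 2 * y ^ ((k : ℝ) - 2 * m) := by
                have hsq : (y ^ m) ^ 2 = y ^ (2 * m) := by
                  rw [← rpow_natCast, ← rpow_mul hy₀.le, Nat.cast_two, mul_comm]
                rw [rpow_sub hy₀, rpow_natCast, mul_pow, hsq]
                ring
    _ = ε / τ ^ 2 * ∫ y in Ioo a R, y ^ ((k : ℝ) - 2 * m) := integral_const_mul _ _
    _ ≤ ε / τ ^ 2 * (a ^ ((k : ℝ) + 1 - 2 * m) / (2 * m - (k + 1))) := by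
        gcongr
        exact (setIntegral_Ioo_rpow_le R ha hq).trans_eq (by ring_nf)

section Radial

variable {E F : Type*} [NormedAddCommGroup E] [NormedSpace ℝ E] [Nontrivial E]
  [FiniteDimensional ℝ E] [MeasurableSpace E] [BorelSpace E] [NormedAddCommGroup F]
  [NormedSpace ℝ F] (μ : Measure E) [μ.IsAddHaarMeasure]

theorem setIntegral_preimage_norm_addHaar (f : ℝ → F) {S : Set ℝ} (hS : MeasurableSet S)
    (hS₀ : S ⊆ Ioi 0) :
    ∫ x in (‖·‖) ⁻¹' S, f ‖x‖ ∂μ =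
      finrank ℝ E • μ.real (ball 0 1) • ∫ y in S, y ^ (finrank ℝ E - 1) • f y := by
  rw [← integral_indicator (measurable_norm hS)]
  have hind (x : E) : ((‖·‖) ⁻¹' S).indicator (fun x ↦ f ‖x‖) x = S.indicator f ‖x‖ :=
    indicator_comp_right (g := f) _
  simp_rw [hind]
  rw [integral_fun_norm_addHaar μ (S.indicator f)]
  simp_rw [← indicator_smul_apply S (fun y : ℝ ↦ y ^ (finrank ℝ E - 1)) f]
  rw [setIntegral_indicator hS, inter_eq_self_of_subset_right hS₀]

theorem setIntegral_annulus_le {m τ ε a : ℝ} (R : ℝ) (hm : (finrank ℝ E : ℝ) < 2 * m)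
    (hτ : 0 < τ) (hε : 0 ≤ ε) (ha : 0 < a) :
    ∫ x in {x : E | a < ‖x‖ ∧ ‖x‖ < R}, ε / (τ * ‖x‖ ^ m * (ε + τ * ‖x‖ ^ m)) ∂μ ≤
      finrank ℝ E * μ.real (ball 0 1) / (τ ^ 2 * (2 * m - finrank ℝ E)) *
        (ε * a ^ ((finrank ℝ E : ℝ) - 2 * m)) := by
  have hdim : ((finrank ℝ E - 1 : ℕ) : ℝ) + 1 = finrank ℝ E := by
    rw [Nat.cast_pred finrank_pos, sub_add_cancel]
  have hradial := setIntegral_Ioo_pow_smul_le (k := finrank ℝ E - 1) R (hdim ▸ hm) hτ hε ha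
  rw [hdim] at hradial
  change ∫ x in (‖·‖) ⁻¹' Ioo a R, _ ∂μ ≤ _
  rw [setIntegral_preimage_norm_addHaar μ (fun t ↦ ε / (τ * t ^ m * (ε + τ * t ^ m)))
      measurableSet_Ioo fun y hy ↦ ha.trans hy.1,
    nsmul_eq_mul, smul_eq_mul]
  calc _ ≤ finrank ℝ E * (μ.real (ball 0 1) *
          (ε / τ ^ 2 * (a ^ ((finrank ℝ E : ℝ) - 2 * m) / (2 * m - finrank ℝ E)))) := by
        gcongr
    _ = _ := by
        have : 2 * m - finrank ℝ E ≠ 0 := by linarith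
        field_simp

end Radial

theorem stmt7_general (d : ℕ) (hd : 2 ≤ d) (m τ₁ R : ℝ)
    (hm2 : ((d : ℝ) - 1) / 2 < m) (hτ : 0 < τ₁) :
    ∃ C ε₀ : ℝ, 0 < C ∧ 0 < ε₀ ∧ ∀ ε : ℝ, 0 < ε → ε < ε₀ →
      (∫ x in {x : EuclideanSpace ℝ (Fin (d - 1)) |
          ε ^ (1 / (12 * m)) < ‖x‖ ∧ ‖x‖ < R},
        ε / (τ₁ * ‖x‖ ^ m * (ε + τ₁ * ‖x‖ ^ m))) ≤
      C * ε ^ ((10 * m + (d : ℝ) - 1) / (12 * m)) := by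
  have hdim : (finrank ℝ (EuclideanSpace ℝ (Fin (d - 1))) : ℝ) = d - 1 := by
    rw [finrank_euclideanSpace_fin, Nat.cast_sub (by omega), Nat.cast_one]
  have : Nontrivial (EuclideanSpace ℝ (Fin (d - 1))) :=
    Module.nontrivial_of_finrank_pos (R := ℝ) (by rw [finrank_euclideanSpace_fin]; omega)
  have hV : 0 < volume.real (ball (0 : EuclideanSpace ℝ (Fin (d - 1))) 1) :=
    ENNReal.toReal_pos (measure_ball_pos _ _ one_pos).ne' measure_ball_lt_top.ne
  have hd₁ : (1 : ℝ) ≤ d - 1 := by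
    rw [le_sub_iff_add_le]; exact_mod_cast hd
  have hm : (0 : ℝ) < 2 * m - (d - 1) := by linarith
  refine ⟨(d - 1) * volume.real (ball (0 : EuclideanSpace ℝ (Fin (d - 1))) 1) /
    (τ₁ ^ 2 * (2 * m - (d - 1))), 1, by positivity, one_pos, fun ε hε _ ↦ ?_⟩
  have hannulus := setIntegral_annulus_le (volume : Measure (EuclideanSpace ℝ (Fin (d - 1))))
    (m := m) R (by linarith) hτ hε.le (rpow_pos_of_pos hε (1 / (12 * m)))
  have hexp : ε * (ε ^ (1 / (12 * m))) ^ ((d : ℝ) - 1 - 2 * m) =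
      ε ^ ((10 * m + (d : ℝ) - 1) / (12 * m)) := by
    rw [← rpow_mul hε.le, mul_comm, ← rpow_add_one hε.ne']
    have hm₀ : m ≠ 0 := (by linarith : 0 < m).ne'
    congr 1
    field_simp
    ring
  rwa [hdim, hexp] at hannulus

/-- Bound on the remainder integral over the annulus {ε^{1/(12m)} < |x'| < R} ⊂ ℝ^{d−1}. -/
theorem stmt7 (d : ℕ) (hd : 2 ≤ d) (m τ₁ R : ℝ)
    (hm2 : ((d : ℝ) - 1) / 2 < m) (hmd : (d : ℝ) - 1 < m) (hτ : 0 < τ₁) (hR : 0 < R) :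
    ∃ C ε₀ : ℝ, 0 < C ∧ 0 < ε₀ ∧ ∀ ε : ℝ, 0 < ε → ε < ε₀ →
      (∫ x in {x : EuclideanSpace ℝ (Fin (d - 1)) |
          ε ^ (1 / (12 * m)) < ‖x‖ ∧ ‖x‖ < R},
        ε / (τ₁ * ‖x‖ ^ m * (ε + τ₁ * ‖x‖ ^ m))) ≤
      C * ε ^ ((10 * m + (d : ℝ) - 1) / (12 * m)) :=
  stmt7_general d hd m τ₁ R hm2 hτ
end

section
/- Let v₁*, v₂* and the rigid displacements ψ₁, ..., ψ_{d(d+1)/2} be as in the perfect-bonding setting, and define the Gram-type matrix D* with entries D*_{αβ} = ∫_{Ω*} ⟨C^0 e(v₁^{*α} + v₂^{*α}), e(v₁^{*β} + v₂^{*β})⟩ dx. If (i) the C^0-energy pairing is coercive on symmetric gradients, (ii) any field w with e(w) ≡ 0 on the connected open set Ω* is a rigid displacement, (iii) the ψ_α are linearly independent, and (iv) Σ_α ξ_α(v₁^{*α} + v₂^{*α}) vanishes on ∂D and equals Σ_α ξ_α ψ_α on ∂D₁*, and no nonzero rigid displacement vanishes on ∂D (which contains d affinely spanning points), then D* is symmetric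 positive definite; in particular det D* > 0. -/
open Matrix

theorem Matrix.dotProduct_mulVec_of_bilin {R M ι : Type*} [CommSemiring R] [AddCommMonoid M]
    [Module R M] [Fintype ι] (B : M →ₗ[R] M →ₗ[R] R) (v : ι → M) (x : ι → R) :
    x ⬝ᵥ ((Matrix.of fun i j => B (v i) (v j)) *ᵥ x) = B (∑ i, x i • v i) (∑ j, x j • v j) := by
  simp only [dotProduct, mulVec, map_sum, map_smul, LinearMap.sum_apply, LinearMap.smul_apply,
    smul_eq_mul, Finset.mul_sum, of_apply]
  rw [Finset.sum_comm]
  refine Finset.sum_congr rfl fun j _ => Finset.sum_congr rfl fun i _ => ?_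
  ring

theorem Matrix.posDef_of_bilin_of_linearIndependent {R M ι : Type*} [CommRing R] [PartialOrder R]
    [StarRing R] [TrivialStar R] [AddCommGroup M] [Module R M] [Fintype ι]
    (B : M →ₗ[R] M →ₗ[R] R) (hsymm : ∀ u w, B u w = B w u) (hpos : ∀ w, 0 ≤ B w w)
    {v : ι → M} (hv : LinearIndependent R v)
    (haniso : ∀ w ∈ Submodule.span R (Set.range v), B w w = 0 → w = 0) :
    (Matrix.of fun i j => B (v i) (v j)).PosDef := by
  refine posDef_iff_dotProduct_mulVec.mpr ⟨IsHermitian.ext fun i j => ?_, fun x hx => ?_⟩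
  · simp [hsymm (v i) (v j)]
  rw [star_trivial, dotProduct_mulVec_of_bilin]
  set w := ∑ i, x i • v i
  have hw : w ≠ 0 := fun hw => hx (funext (Fintype.linearIndependent_iff.mp hv x hw))
  refine (hpos w).lt_of_ne fun h => hw (haniso w ?_ h.symm)
  exact Submodule.sum_mem _ fun i _ => Submodule.smul_mem _ _ (Submodule.subset_span ⟨i, rfl⟩)

theorem stmt16_general (d : ℕ)
    {W W' : Type} [AddCommGroup W] [Module ℝ W] [AddCommGroup W'] [Module ℝ W']
    (B : W →ₗ[ℝ] W →ₗ[ℝ] ℝ)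
    (hsymm : ∀ u v, B u v = B v u)
    (hpos : ∀ w, 0 ≤ B w w)
    (Rig : Submodule ℝ W)
    (hker : ∀ w, B w w = 0 → w ∈ Rig)
    (T T₁ : W →ₗ[ℝ] W')
    (ψ v : Fin (d * (d + 1) / 2) → W)
    (hTv : ∀ α, T (v α) = 0)
    (hT₁v : ∀ α, T₁ (v α) = T₁ (ψ α))
    (hRigT : ∀ r ∈ Rig, T r = 0 → r = 0)
    (hindep : LinearIndependent ℝ (fun α => T₁ (ψ α))) :
    (Matrix.of fun α β => B (v α) (v β)).PosDef ∧
    0 < (Matrix.of fun α β => B (v α) (v β)).det := by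
  have hv : LinearIndependent ℝ v :=
    .of_comp T₁ (by simpa only [Function.comp_def, hT₁v] using hindep)
  have hspan_ker : Submodule.span ℝ (Set.range v) ≤ LinearMap.ker T :=
    Submodule.span_le.mpr (Set.range_subset_iff.mpr hTv)
  have hD := Matrix.posDef_of_bilin_of_linearIndependent B hsymm hpos hv
    fun w hw hBw => hRigT w (hker w hBw) (hspan_ker hw)
  exact ⟨hD, hD.det_pos⟩

/-- Abstract positive-definiteness of the Gram-type matrix D*_{αβ} = B(v_α, v_β) built from
the energy pairing B, where B w w = 0 forces w rigid, rigid fields vanishing on ∂D are zero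
(trace T), the v_α vanish on ∂D and agree with the ψ_α on ∂D₁* (trace T₁), and the boundary
values T₁(ψ_α) are linearly independent. -/
theorem stmt16 (d : ℕ) (hd : 2 ≤ d)
    {W W' : Type} [AddCommGroup W] [Module ℝ W] [AddCommGroup W'] [Module ℝ W']
    (B : W →ₗ[ℝ] W →ₗ[ℝ] ℝ)
    (hsymm : ∀ u v, B u v = B v u)
    (hpos : ∀ w, 0 ≤ B w w)
    (Rig : Submodule ℝ W)
    (hker : ∀ w, B w w = 0 → w ∈ Rig)
    (T T₁ : W →ₗ[ℝ] W')
    (ψ v : Fin (d * (d + 1) / 2) → W)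
    (hψmem : ∀ α, ψ α ∈ Rig)
    (hTv : ∀ α, T (v α) = 0)
    (hT₁v : ∀ α, T₁ (v α) = T₁ (ψ α))
    (hRigT : ∀ r ∈ Rig, T r = 0 → r = 0)
    (hindep : LinearIndependent ℝ (fun α => T₁ (ψ α))) :
    (Matrix.of fun α β => B (v α) (v β)).PosDef ∧
    0 < (Matrix.of fun α β => B (v α) (v β)).det :=
  stmt16_general d B hsymm hpos Rig hker T T₁ ψ v hTv hT₁v hRigT hindep
end

section
/- Let v₁*, v₂* be harmonic in Ω* ⊂ ℝ^d with v₁* = 1 on ∂D₁*∖{0}, v₁* = 0 on ∂D₂ ∪ ∂D; v₂* = 1 on ∂D₂, v₂* = 0 on (∂D₁*∖{0}) ∪ ∂D. Define a*_{ij} = −∫_{∂D_j*} (∂v_i*/∂ν)|₊. Then a*₁₁ a*₂₂ − a*₁₂ a*₂₁ > 0 and Σ_{i,j=1}^2 a*_{ij} > 0, assuming the Hopf lemma sign conditions ∂v₁*/∂ν < 0 on ∂D₁*∖{0} and on ∂D, ∂v₂*/∂ν > 0 on ∂D₁*∖{0}, ∂v₂*/∂ν < 0 on ∂D, together with the flux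 identity ∫_{∂D₁* ∪ ∂D₂} (∂v_i*/∂ν)|₊ = ∫_{∂D} (∂v_i*/∂ν)|₊ for i = 1, 2. -/
/-- Positivity of the 2×2 determinant and of the sum of the a*_{ij} in the perfect
conductivity problem. Here f i j denotes the flux ∫_{Γ_j} ∂v_i*/∂ν|₊ of the harmonic
function v_i* over Γ₀ = ∂D₁*, Γ₁ = ∂D₂, Γ₂ = ∂D; the Hopf-lemma sign conditions give
f 0 0 < 0, f 0 2 < 0, f 1 0 > 0, f 1 2 < 0, and harmonicity gives the flux identity
f i 0 + f i 1 = f i 2; a*_{ij} = −f i j for j ∈ {0,1}. -/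
theorem stmt17 (f : Fin 2 → Fin 3 → ℝ)
    (h00 : f 0 0 < 0) (h02 : f 0 2 < 0) (h10 : 0 < f 1 0) (h12 : f 1 2 < 0)
    (hflux : ∀ i, f i 0 + f i 1 = f i 2)
    (a : Fin 2 → Fin 2 → ℝ)
    (ha : ∀ i j, a i j = - f i (Fin.castSucc j)) :
    0 < a 0 0 * a 1 1 - a 0 1 * a 1 0 ∧ 0 < a 0 0 + a 0 1 + a 1 0 + a 1 1 := by
  have e00 : a 0 0 = -f 0 0 := by rw [ha]; rfl
  have e01 : a 0 1 = -f 0 1 := by rw [ha]; rfl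
  have e10 : a 1 0 = -f 1 0 := by rw [ha]; rfl
  have e11 : a 1 1 = -f 1 1 := by rw [ha]; rfl
  have hf0 := hflux 0; have hf1 := hflux 1
  constructor <;> nlinarith [mul_pos (neg_pos.2 h00) (neg_pos.2 h12), mul_pos (neg_pos.2 h02) h10]
end
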